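/- Assume CH, and let T and U be normal countably closed ω₂-Aronszajn trees with levels of size ω₁. Let p ∈ P(T,U) and let B be a countable subset of ω₂ ∩ cof(ω₁) with sup(A_p) < min(B). Then there is q ≤ p in P(T,U) with A_q = A_p ∪ B and f_q ↾ (T↾A_p) = f_p. -/

import Mathlib

/-!
From a node `x` of `dom f_p`, follow `f_p` upwards through an enumeration of the levels of `A_p`;
by countable closure the resulting chain and its image in `U` are bounded, and by normality the
bounds extend to nodes `Γ_x`, `Δ_x` above every level of `A_p ∪ B`. Then `f_p` maps the node below
`Γ_x` at each level of `A_p` to the node below `Δ_x` at that level. Running through `dom f_p` in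
a fixed enumeration and keeping `x` only when it is not below `Γ_y` for an earlier kept `y` gives
branches that cover `dom f_p` and pairwise split at a level of `A_p`. Adding the pairs
`(Γ_x ↾ b, Δ_x ↾ b)` for `b ∈ B` gives `q`: since `f_p` is injective, the branches through the
`Δ_x` split as well, so `f_q` stays injective.
-/

universe u

/-- A set-theoretic tree: a strict partial order in which the set of predecessors
of any node is well-ordered. -/
structure STree (α : Type u) where
  lt : α → α → Prop
  irrefl : ∀ x, ¬ lt x x
  trans : ∀ {x y z}, lt x y → lt y z → lt x z
  wo : ∀ x : α, IsWellOrder {y // lt y x} (fun a b => lt a.1 b.1)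

namespace STree

variable {α β : Type u}

/-- The height of a node: the order type of its set of predecessors. -/
noncomputable def ht (T : STree α) (x : α) : Ordinal :=
  @Ordinal.type {y // T.lt y x} (fun a b => T.lt a.1 b.1) (T.wo x)

/-- The reflexive closure of the tree order. -/
def le (T : STree α) (x y : α) : Prop := T.lt x y ∨ x = y

/-- `T` is a `κ`-tree: height `κ` and all levels of size `< κ`. -/
def IsKTree (T : STree α) (κ : Cardinal) : Prop :=
  (∀ x, T.ht x < κ.ord) ∧ (∀ γ < κ.ord, ∃ x, T.ht x = γ) ∧
    ∀ γ : Ordinal, Cardinal.mk {x // T.ht x = γ} < κ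

/-- `T` is a normal `κ`-tree. -/
def IsNormalTree (T : STree α) (κ : Cardinal) : Prop :=
  (∀ x, ∀ γ, T.ht x < γ → γ < κ.ord → ∃ y, T.lt x y ∧ T.ht y = γ) ∧
  (∀ x y, x ≠ y → T.ht x = T.ht y → Order.IsSuccLimit (T.ht x) →
    ∃ z, T.lt z x ∧ ¬ T.lt z y) ∧
  (∀ x, ∃ y z, T.lt x y ∧ T.lt x z ∧ ¬ T.le y z ∧ ¬ T.le z y)

/-- A chain in `T`: a linearly ordered subset. -/
def IsChain (T : STree α) (b : Set α) : Prop :=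
  ∀ x ∈ b, ∀ y ∈ b, T.le x y ∨ T.le y x

/-- `T` is countably closed: every countable chain has an upper bound. -/
def CClosed (T : STree α) : Prop :=
  ∀ b : Set α, b.Countable → T.IsChain b → ∃ z, ∀ x ∈ b, T.le x z

/-- `T` is a `κ`-Aronszajn tree: a `κ`-tree with no cofinal chain. -/
def Aronszajn (T : STree α) (κ : Cardinal) : Prop :=
  T.IsKTree κ ∧ ¬ ∃ b : Set α, T.IsChain b ∧ ∀ γ < κ.ord, ∃ x ∈ b, T.ht x = γ

end STree

/-- The continuum hypothesis. -/
def CH : Prop := (2 : Cardinal.{0}) ^ Cardinal.aleph0 = Cardinal.aleph 1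

universe v

/-- A pair `(A, F)` as in the forcing `ℙ(T,U)`: a set of ordinals together with the
graph of a partial function from `T` to `U`. -/
structure PPair (α β : Type u) where
  A : Set Ordinal.{v}
  F : Set (α × β)

/-- Ordinals below `ω₂` of cofinality `ω₁`. -/
def cofW1 : Set Ordinal :=
  {γ | γ < (Cardinal.aleph 2).ord ∧ Ordinal.cof γ = Cardinal.aleph 1}

/-- The domain of a graph. -/
def dom' {α β : Type u} (F : Set (α × β)) : Set α := {x | ∃ y, (x, y) ∈ F}

/-- `p = (A, F)` is a condition in the forcing poset `ℙ(T,U)`. -/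
def IsCond {α β : Type u} (T : STree α) (U : STree β) (p : PPair α β) : Prop :=
  p.A.Countable ∧ p.A ⊆ cofW1 ∧
  (∀ q ∈ p.F, ∀ r ∈ p.F, q.1 = r.1 → q.2 = r.2) ∧
  (∀ q ∈ p.F, ∀ r ∈ p.F, q.2 = r.2 → q.1 = r.1) ∧
  (dom' p.F).Countable ∧
  (∀ q ∈ p.F, T.ht q.1 ∈ p.A) ∧
  (∀ q ∈ p.F, ∀ z : α, T.lt z q.1 → T.ht z ∈ p.A → z ∈ dom' p.F) ∧
  (∀ q ∈ p.F, ∀ b ∈ p.A, T.ht q.1 < b → ∃ r ∈ p.F, T.ht r.1 = b ∧ T.lt q.1 r.1) ∧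
  (∀ q ∈ p.F, U.ht q.2 = T.ht q.1) ∧
  (∀ q ∈ p.F, ∀ r ∈ p.F, T.lt q.1 r.1 → U.lt q.2 r.2)

/-- The order on `ℙ(T,U)`: `p ≤ q` iff `p` extends `q` in both coordinates. -/
def CondLe {α β : Type u} (p q : PPair α β) : Prop := q.A ⊆ p.A ∧ q.F ⊆ p.F

/-- A normal countably closed `ω₂`-Aronszajn tree all of whose levels have size `ω₁`. -/
def NiceTree {α : Type u} (T : STree α) : Prop :=
  T.IsKTree (Cardinal.aleph 2) ∧ T.IsNormalTree (Cardinal.aleph 2) ∧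
    T.CClosed ∧ T.Aronszajn (Cardinal.aleph 2) ∧
    ∀ γ < (Cardinal.aleph 2).ord, Cardinal.mk {x // T.ht x = γ} = Cardinal.aleph 1

namespace STree

variable {α : Type u} {T : STree α} {x y z : α}

theorem le_refl (T : STree α) (x : α) : T.le x x := Or.inr rfl

theorem le_of_lt (h : T.lt x y) : T.le x y := Or.inl h

theorem lt_of_le_of_lt (hxy : T.le x y) (hyz : T.lt y z) : T.lt x z := by
  rcases hxy with hxy | rfl
  exacts [T.trans hxy hyz, hyz]

theorem le_trans (hxy : T.le x y) (hyz : T.le y z) : T.le x z := by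
  rcases hyz with hyz | rfl
  exacts [le_of_lt (lt_of_le_of_lt hxy hyz), hxy]

theorem le_of_le_succ {s : ℕ → α} (hs : ∀ k, T.le (s k) (s (k + 1))) {j k : ℕ} (hjk : j ≤ k) :
    T.le (s j) (s k) := by
  induction k, hjk using Nat.le_induction with
  | base => exact T.le_refl _
  | succ k _ ih => exact le_trans ih (hs k)

theorem isChain_range_of_le_succ {s : ℕ → α} (hs : ∀ k, T.le (s k) (s (k + 1))) :
    T.IsChain (Set.range s) := by
  rintro _ ⟨j, rfl⟩ _ ⟨k, rfl⟩
  rcases le_total j k with h | h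
  exacts [Or.inl (le_of_le_succ hs h), Or.inr (le_of_le_succ hs h)]

theorem ht_eq_typein (h : T.lt x y) :
    T.ht x = @Ordinal.typein {z // T.lt z y} (fun a b => T.lt a.1 b.1) (T.wo y) ⟨x, h⟩ := by
  have := T.wo y
  have := T.wo x
  rw [← Ordinal.type_subrel]
  exact RelIso.ordinalType_congr
    { toFun := fun w => ⟨⟨w.1, T.trans w.2 h⟩, w.2⟩
      invFun := fun v => ⟨v.1.1, v.2⟩
      map_rel_iff' := Iff.rfl }

theorem ht_lt_ht (h : T.lt x y) : T.ht x < T.ht y := by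
  have := T.wo y
  rw [ht_eq_typein h]
  exact Ordinal.typein_lt_type _ _

theorem exists_lt_ht_eq {b : Ordinal} (h : b < T.ht y) : ∃ x, T.lt x y ∧ T.ht x = b := by
  have := T.wo y
  obtain ⟨x, hx⟩ := Ordinal.typein_surj (fun a b : {z // T.lt z y} => T.lt a.1 b.1) h
  exact ⟨x.1, x.2, (ht_eq_typein x.2).trans hx⟩

theorem lt_trichotomy_of_lt (hx : T.lt x z) (hy : T.lt y z) : T.lt x y ∨ x = y ∨ T.lt y x := by
  have := T.wo z
  rcases trichotomous_of (fun a b : {w // T.lt w z} => T.lt a.1 b.1) ⟨x, hx⟩ ⟨y, hy⟩ with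
    h | h | h
  exacts [Or.inl h, Or.inr (Or.inl (congrArg Subtype.val h)), Or.inr (Or.inr h)]

theorem eq_of_lt_of_lt_of_ht_eq (hx : T.lt x z) (hy : T.lt y z) (h : T.ht x = T.ht y) :
    x = y := by
  rcases lt_trichotomy_of_lt hx hy with hxy | hxy | hxy
  exacts [absurd h (ht_lt_ht hxy).ne, hxy, absurd h (ht_lt_ht hxy).ne']

theorem lt_of_lt_of_lt_of_ht_lt (hx : T.lt x z) (hy : T.lt y z) (h : T.ht x < T.ht y) :
    T.lt x y := by
  rcases lt_trichotomy_of_lt hx hy with hxy | rfl | hxy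
  exacts [hxy, absurd h (lt_irrefl _), absurd h (ht_lt_ht hxy).not_gt]

theorem le_of_lt_of_lt_of_ht_le (hx : T.lt x z) (hy : T.lt y z) (h : T.ht x ≤ T.ht y) :
    T.le x y := by
  rcases h.lt_or_eq with h | h
  exacts [le_of_lt (lt_of_lt_of_lt_of_ht_lt hx hy h), Or.inr (eq_of_lt_of_lt_of_ht_eq hx hy h)]

/-- The predecessor of `y` at level `b`; junk value `y` when `T.ht y ≤ b`. -/
noncomputable def predAt (T : STree α) (y : α) (b : Ordinal) : α :=
  open Classical in if h : ∃ x, T.lt x y ∧ T.ht x = b then h.choose else y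

variable {a b : Ordinal}

theorem predAt_spec (h : b < T.ht y) : T.lt (T.predAt y b) y ∧ T.ht (T.predAt y b) = b := by
  rw [predAt, dif_pos (exists_lt_ht_eq h)]
  exact (exists_lt_ht_eq h).choose_spec

theorem predAt_lt (h : b < T.ht y) : T.lt (T.predAt y b) y := (predAt_spec h).1

theorem ht_predAt (h : b < T.ht y) : T.ht (T.predAt y b) = b := (predAt_spec h).2

theorem predAt_ht (h : T.lt x y) : T.predAt y (T.ht x) = x :=
  eq_of_lt_of_lt_of_ht_eq (predAt_lt (ht_lt_ht h)) h (ht_predAt (ht_lt_ht h))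

theorem lt_predAt (hx : T.lt x y) (hxb : T.ht x < b) (hb : b < T.ht y) :
    T.lt x (T.predAt y b) :=
  lt_of_lt_of_lt_of_ht_lt hx (predAt_lt hb) (by rwa [ht_predAt hb])

theorem predAt_lt_predAt (hab : a < b) (hb : b < T.ht y) :
    T.lt (T.predAt y a) (T.predAt y b) :=
  lt_predAt (predAt_lt (hab.trans hb)) (by rwa [ht_predAt (hab.trans hb)]) hb

theorem predAt_predAt (hab : a < b) (hb : b < T.ht y) :
    T.predAt (T.predAt y b) a = T.predAt y a := by
  have h := predAt_ht (predAt_lt_predAt hab hb)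
  rwa [ht_predAt (hab.trans hb)] at h

theorem exists_forall_lt_of_le_succ {κ : Cardinal} (hκ : Cardinal.aleph0 ≤ κ) (hK : T.IsKTree κ)
    (hN : T.IsNormalTree κ) (hC : T.CClosed) {s : ℕ → α} (hs : ∀ k, T.le (s k) (s (k + 1)))
    {γ : Ordinal} (hγ : γ < κ.ord) : ∃ Γ, (∀ k, T.lt (s k) Γ) ∧ γ < T.ht Γ := by
  obtain ⟨z, hz⟩ := hC _ (Set.countable_range s) (isChain_range_of_le_succ hs)
  obtain ⟨Γ, hzΓ, hΓ⟩ := hN.1 z (Order.succ (max (T.ht z) γ))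
    (Order.lt_succ_of_le (le_max_left _ _))
    ((Cardinal.isSuccLimit_ord hκ).succ_lt (max_lt (hK.1 z) hγ))
  refine ⟨Γ, fun k => lt_of_le_of_lt (hz _ ⟨k, rfl⟩) hzΓ, ?_⟩
  rw [hΓ]
  exact Order.lt_succ_of_le (le_max_right _ _)

end STree

theorem WellFounded.exists_greedy_subset {ι : Type*} {r : ι → ι → Prop} (hr : WellFounded r)
    (R : ι → ι → Prop) :
    ∃ S : Set ι, (∀ i ∈ S, ∀ j ∈ S, r j i → ¬ R i j) ∧ ∀ i ∉ S, ∃ j ∈ S, r j i ∧ R i j := by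
  let P : ι → Prop := hr.fix fun i ih => ∀ j (h : r j i), ih j h → ¬ R i j
  have hP : ∀ i, P i ↔ ∀ j, r j i → P j → ¬ R i j := fun i => by
    simp only [P]
    rw [hr.fix_eq]
  refine ⟨{i | P i}, fun i hi j hj hji => (hP i).1 hi j hji hj, fun i hi => ?_⟩
  obtain ⟨j, hji, hj, hR⟩ := by simpa [hP i] using hi
  exact ⟨j, hj, hji, hR⟩

theorem Ordinal.bddAbove_of_countable {s : Set Ordinal.{v}} (hs : s.Countable) : BddAbove s :=
  have := hs.to_subtype
  Ordinal.bddAbove_of_small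

theorem Ordinal.sSup_lt_ord_of_countable {κ : Cardinal.{v}} (hκ : κ.IsRegular)
    (hκ₀ : Cardinal.aleph0 < κ) {s : Set Ordinal.{v}} (hs : s.Countable) (h : ∀ a ∈ s, a < κ.ord) :
    sSup s < κ.ord := by
  refine Ordinal.sSup_lt_of_lt_cof ?_ h
  rw [← Ordinal.lift_cof, hκ.cof_ord]
  exact hs.le_aleph0.trans_lt (by simpa using hκ₀)

open STree

section Forcing

variable {α β : Type u} {T : STree α} {U : STree β} {p : PPair α β}

theorem IsCond.ht_mem (hp : IsCond T U p) {r : α × β} (hr : r ∈ p.F) : T.ht r.1 ∈ p.A :=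
  hp.2.2.2.2.2.1 r hr

theorem IsCond.ht_snd (hp : IsCond T U p) {r : α × β} (hr : r ∈ p.F) : U.ht r.2 = T.ht r.1 :=
  hp.2.2.2.2.2.2.2.2.1 r hr

theorem IsCond.snd_eq_of_fst_eq (hp : IsCond T U p) {r r' : α × β} (hr : r ∈ p.F)
    (hr' : r' ∈ p.F) (h : r.1 = r'.1) : r.2 = r'.2 :=
  hp.2.2.1 r hr r' hr' h

theorem IsCond.fst_eq_of_snd_eq (hp : IsCond T U p) {r r' : α × β} (hr : r ∈ p.F)
    (hr' : r' ∈ p.F) (h : r.2 = r'.2) : r.1 = r'.1 :=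
  hp.2.2.2.1 r hr r' hr' h

theorem IsCond.countable_dom (hp : IsCond T U p) : (dom' p.F).Countable := hp.2.2.2.2.1

theorem IsCond.snd_le_snd (hp : IsCond T U p) {r r' : α × β} (hr : r ∈ p.F) (hr' : r' ∈ p.F)
    (h : T.le r.1 r'.1) : U.le r.2 r'.2 := by
  obtain ⟨-, -, hfun, -, -, -, -, -, -, hmono⟩ := hp
  rcases h with h | h
  exacts [Or.inl (hmono r hr r' hr' h), Or.inr (hfun r hr r' hr' h)]

theorem IsCond.exists_mem_of_le (hp : IsCond T U p) {r : α × β} (hr : r ∈ p.F) {z : α}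
    (hz : T.le z r.1) (hzA : T.ht z ∈ p.A) : ∃ w, (z, w) ∈ p.F ∧ U.le w r.2 := by
  rcases hz with hz | rfl
  · obtain ⟨w, hw⟩ := hp.2.2.2.2.2.2.1 r hr z hz hzA
    exact ⟨w, hw, hp.snd_le_snd hw hr (T.le_of_lt hz)⟩
  · exact ⟨r.2, hr, U.le_refl _⟩

theorem IsCond.exists_chain (hp : IsCond T U p) {r₀ : α × β} (hr₀ : r₀ ∈ p.F) :
    ∃ s : ℕ → α × β, s 0 = r₀ ∧ (∀ k, s k ∈ p.F) ∧ (∀ k, T.le (s k).1 (s (k + 1)).1) ∧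
      ∀ a ∈ p.A, ∃ k, a ≤ T.ht (s k).1 := by
  obtain ⟨hA, -, -, -, -, -, -, hup, -, -⟩ := hp
  obtain ⟨e, he⟩ := Set.countable_iff_exists_subset_range.1 hA
  have hstep : ∀ (r : p.F) (c : Ordinal), ∃ r' : p.F,
      T.le r.1.1 r'.1.1 ∧ (c ∈ p.A → c ≤ T.ht r'.1.1) := by
    intro r c
    by_cases h : c ∈ p.A ∧ T.ht r.1.1 < c
    · obtain ⟨r', hr', hht, hlt⟩ := hup r.1 r.2 c h.1 h.2
      exact ⟨⟨r', hr'⟩, T.le_of_lt hlt, fun _ => hht.ge⟩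
    · exact ⟨r, T.le_refl _, fun hc => not_lt.1 fun hlt => h ⟨hc, hlt⟩⟩
  choose step hstep using hstep
  let s : ℕ → p.F := fun k => Nat.rec ⟨r₀, hr₀⟩ (fun k r => step r (e k)) k
  refine ⟨fun k => (s k).1, rfl, fun k => (s k).2, fun k => (hstep (s k) (e k)).1, ?_⟩
  rintro a ha
  obtain ⟨k, rfl⟩ := he ha
  exact ⟨k + 1, (hstep (s k) (e k)).2 ha⟩

variable (T U p) in
def Threads (Γ : α) (Δ : β) : Prop :=
  ∀ a ∈ p.A, a < T.ht Γ → (T.predAt Γ a, U.predAt Δ a) ∈ p.F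

theorem IsCond.exists_threads (hT : NiceTree T) (hU : NiceTree U) (hp : IsCond T U p)
    {r₀ : α × β} (hr₀ : r₀ ∈ p.F) {γ : Ordinal} (hγ : γ < (Cardinal.aleph 2).ord) :
    ∃ Γ Δ, T.lt r₀.1 Γ ∧ γ < T.ht Γ ∧ γ < U.ht Δ ∧ Threads T U p Γ Δ := by
  obtain ⟨s, hs0, hsF, hsT, hsA⟩ := hp.exists_chain hr₀
  have hsU : ∀ k, U.le (s k).2 (s (k + 1)).2 := fun k => hp.snd_le_snd (hsF k) (hsF _) (hsT k)
  have hℵ := Cardinal.aleph0_le_aleph 2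
  obtain ⟨Γ, hΓ, hγΓ⟩ := T.exists_forall_lt_of_le_succ hℵ hT.1 hT.2.1 hT.2.2.1 hsT hγ
  obtain ⟨Δ, hΔ, hγΔ⟩ := U.exists_forall_lt_of_le_succ hℵ hU.1 hU.2.1 hU.2.2.1 hsU hγ
  refine ⟨Γ, Δ, hs0 ▸ hΓ 0, hγΓ, hγΔ, fun a ha haΓ => ?_⟩
  obtain ⟨k, hk⟩ := hsA a ha
  have hle : T.le (T.predAt Γ a) (s k).1 :=
    le_of_lt_of_lt_of_ht_le (predAt_lt haΓ) (hΓ k) (by rwa [ht_predAt haΓ])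
  obtain ⟨w, hw, hwk⟩ := hp.exists_mem_of_le (hsF k) hle (by rwa [ht_predAt haΓ])
  have hwa : U.ht w = a := (hp.ht_snd hw).trans (ht_predAt haΓ)
  rwa [← hwa, predAt_ht (U.lt_of_le_of_lt hwk (hΔ k)), hwa]

variable {ι : Type*}

variable (T U p) in
structure ThreadFamily (C : Set Ordinal) (S : Set ι) (Γ : ι → α) (Δ : ι → β) : Prop where
  threads : ∀ i ∈ S, Threads T U p (Γ i) (Δ i)
  lt_ht_fst : ∀ i ∈ S, ∀ c ∈ C, c < T.ht (Γ i)
  lt_ht_snd : ∀ i ∈ S, ∀ c ∈ C, c < U.ht (Δ i)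
  split : ∀ i ∈ S, ∀ j ∈ S, i ≠ j → ∃ a ∈ p.A, T.predAt (Γ i) a ≠ T.predAt (Γ j) a
  cover : ∀ r ∈ p.F, ∃ i ∈ S, T.lt r.1 (Γ i)

theorem IsCond.exists_threadFamily (hT : NiceTree T) (hU : NiceTree U) (hp : IsCond T U p)
    {C : Set Ordinal} (hC : C.Countable) (hCω : ∀ c ∈ C, c < (Cardinal.aleph 2).ord)
    (hAC : p.A ⊆ C) :
    ∃ (S : Set (dom' p.F)) (Γ : dom' p.F → α) (Δ : dom' p.F → β),
      ThreadFamily T U p C S Γ Δ := by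
  have hreg : (Cardinal.aleph 2).IsRegular := by
    simpa [one_add_one_eq_two] using Cardinal.isRegular_aleph_add_one 1
  have hγ := Ordinal.sSup_lt_ord_of_countable hreg
    (Cardinal.aleph0_lt_aleph_one.trans (Cardinal.aleph_lt_aleph.2 one_lt_two)) hC hCω
  have hCγ : ∀ c ∈ C, c ≤ sSup C := fun c hc => le_csSup (Ordinal.bddAbove_of_countable hC) hc
  have htop : ∀ x : dom' p.F, ∃ Γ Δ, T.lt x.1 Γ ∧ sSup C < T.ht Γ ∧ sSup C < U.ht Δ ∧
      Threads T U p Γ Δ := fun x => hp.exists_threads hT hU x.2.choose_spec hγ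
  choose Γ Δ hxΓ hΓ hΔ hthr using htop
  have := hp.countable_dom.to_subtype
  obtain ⟨rank, hrank⟩ := exists_injective_nat (dom' p.F)
  obtain ⟨S, hSind, hSmax⟩ :=
    (InvImage.wf rank wellFounded_lt).exists_greedy_subset fun i j => T.lt i.1 (Γ j)
  refine ⟨S, Γ, Δ, ⟨fun i _ => hthr i, fun i _ c hc => (hCγ c hc).trans_lt (hΓ i),
    fun i _ c hc => (hCγ c hc).trans_lt (hΔ i), fun i hi j hj hij => ?_, fun r hr => ?_⟩⟩
  · wlog hji : rank j < rank i generalizing i j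
    · obtain ⟨a, ha, hne⟩ := this j hj i hi hij.symm
        ((hrank.ne hij).lt_or_gt.resolve_right hji)
      exact ⟨a, ha, hne.symm⟩
    have hiA : T.ht i.1 ∈ p.A := hp.ht_mem i.2.choose_spec
    refine ⟨T.ht i.1, hiA, fun heq => hSind i hi j hj hji ?_⟩
    rw [predAt_ht (hxΓ i)] at heq
    exact heq ▸ predAt_lt ((hCγ _ (hAC hiA)).trans_lt (hΓ j))
  · by_cases hx : ⟨r.1, r.2, hr⟩ ∈ S
    · exact ⟨_, hx, hxΓ ⟨r.1, r.2, hr⟩⟩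
    · obtain ⟨j, hj, -, hlt⟩ := hSmax _ hx
      exact ⟨j, hj, hlt⟩

variable (T U) in
def levelPairs (S : Set ι) (Γ : ι → α) (Δ : ι → β) (B : Set Ordinal) : Set (α × β) :=
  {r | ∃ i ∈ S, ∃ b ∈ B, r = (T.predAt (Γ i) b, U.predAt (Δ i) b)}

namespace ThreadFamily

variable {B : Set Ordinal} {S : Set ι} {Γ : ι → α} {Δ : ι → β} {i j : ι} {r r' : α × β}

theorem predAt_mem (hF : ThreadFamily T U p (p.A ∪ B) S Γ Δ) (hi : i ∈ S) {c : Ordinal}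
    (hc : c ∈ p.A ∪ B) :
    (T.predAt (Γ i) c, U.predAt (Δ i) c) ∈ p.F ∪ levelPairs T U S Γ Δ B := by
  rcases hc with hc | hc
  exacts [Or.inl (hF.threads i hi c hc (hF.lt_ht_fst i hi c (Or.inl hc))),
    Or.inr ⟨i, hi, c, hc, rfl⟩]

theorem ht_mem (hp : IsCond T U p) (hF : ThreadFamily T U p (p.A ∪ B) S Γ Δ)
    (hr : r ∈ p.F ∪ levelPairs T U S Γ Δ B) : T.ht r.1 ∈ p.A ∪ B ∧ U.ht r.2 = T.ht r.1 := by
  rcases hr with hr | ⟨i, hi, b, hb, rfl⟩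
  · exact ⟨Or.inl (hp.ht_mem hr), hp.ht_snd hr⟩
  · rw [ht_predAt (hF.lt_ht_fst i hi b (Or.inr hb)), ht_predAt (hF.lt_ht_snd i hi b (Or.inr hb))]
    exact ⟨Or.inr hb, rfl⟩

theorem exists_lt (hF : ThreadFamily T U p (p.A ∪ B) S Γ Δ)
    (hr : r ∈ p.F ∪ levelPairs T U S Γ Δ B) : ∃ i ∈ S, T.lt r.1 (Γ i) := by
  rcases hr with hr | ⟨i, hi, b, hb, rfl⟩
  exacts [hF.cover r hr, ⟨i, hi, predAt_lt (hF.lt_ht_fst i hi b (Or.inr hb))⟩]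

theorem predAt_ne (hp : IsCond T U p) (hAB : ∀ a ∈ p.A, ∀ b ∈ B, a < b)
    (hF : ThreadFamily T U p (p.A ∪ B) S Γ Δ) (hi : i ∈ S) (hj : j ∈ S) (hij : i ≠ j)
    {b : Ordinal} (hb : b ∈ B) :
    T.predAt (Γ i) b ≠ T.predAt (Γ j) b ∧ U.predAt (Δ i) b ≠ U.predAt (Δ j) b := by
  obtain ⟨a, ha, hne⟩ := hF.split i hi j hj hij
  have hab := hAB a ha b hb
  have hbΓ := fun k (hk : k ∈ S) => hF.lt_ht_fst k hk b (Or.inr hb)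
  have hbΔ := fun k (hk : k ∈ S) => hF.lt_ht_snd k hk b (Or.inr hb)
  refine ⟨fun heq => hne ?_, fun heq => hne ?_⟩
  · rw [← predAt_predAt hab (hbΓ i hi), heq, predAt_predAt hab (hbΓ j hj)]
  · refine hp.fst_eq_of_snd_eq (hF.threads i hi a ha (hab.trans (hbΓ i hi)))
      (hF.threads j hj a ha (hab.trans (hbΓ j hj))) ?_
    rw [← predAt_predAt hab (hbΔ i hi), heq, predAt_predAt hab (hbΔ j hj)]

theorem eq_of_fst_eq_or_snd_eq (hp : IsCond T U p) (hAB : ∀ a ∈ p.A, ∀ b ∈ B, a < b)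
    (hF : ThreadFamily T U p (p.A ∪ B) S Γ Δ) (hr : r ∈ p.F ∪ levelPairs T U S Γ Δ B)
    (hr' : r' ∈ p.F ∪ levelPairs T U S Γ Δ B) (h : r.1 = r'.1 ∨ r.2 = r'.2) : r = r' := by
  have hht : T.ht r.1 = T.ht r'.1 := h.elim (congrArg T.ht) fun h =>
    by rw [← (hF.ht_mem hp hr).2, h, (hF.ht_mem hp hr').2]
  have hBA : ∀ a ∈ p.A, ∀ b ∈ B, a ≠ b := fun a ha b hb => (hAB a ha b hb).ne
  rcases hr with hr | ⟨i, hi, b, hb, rfl⟩ <;> rcases hr' with hr' | ⟨j, hj, b', hb', rfl⟩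
  · rcases h with h | h
    exacts [Prod.ext h (hp.snd_eq_of_fst_eq hr hr' h), Prod.ext (hp.fst_eq_of_snd_eq hr hr' h) h]
  · rw [ht_predAt (hF.lt_ht_fst j hj b' (Or.inr hb'))] at hht
    exact absurd hht (hBA _ (hp.ht_mem hr) b' hb')
  · rw [ht_predAt (hF.lt_ht_fst i hi b (Or.inr hb))] at hht
    exact absurd hht.symm (hBA _ (hp.ht_mem hr') b hb)
  · rw [ht_predAt (hF.lt_ht_fst i hi b (Or.inr hb)),
      ht_predAt (hF.lt_ht_fst j hj b' (Or.inr hb'))] at hht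
    subst hht
    by_cases hij : i = j
    · rw [hij]
    · obtain ⟨hneT, hneU⟩ := hF.predAt_ne hp hAB hi hj hij hb
      exact (h.elim hneT hneU).elim

theorem eq_predAt (hp : IsCond T U p) (hAB : ∀ a ∈ p.A, ∀ b ∈ B, a < b)
    (hF : ThreadFamily T U p (p.A ∪ B) S Γ Δ) (hi : i ∈ S)
    (hr : r ∈ p.F ∪ levelPairs T U S Γ Δ B) (hlt : T.lt r.1 (Γ i)) :
    r = (T.predAt (Γ i) (T.ht r.1), U.predAt (Δ i) (T.ht r.1)) :=
  hF.eq_of_fst_eq_or_snd_eq hp hAB hr (hF.predAt_mem hi (hF.ht_mem hp hr).1)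
    (Or.inl (predAt_ht hlt).symm)

theorem isCond (hp : IsCond T U p) (hBc : B.Countable) (hBsub : B ⊆ cofW1)
    (hAB : ∀ a ∈ p.A, ∀ b ∈ B, a < b) (hS : S.Countable)
    (hF : ThreadFamily T U p (p.A ∪ B) S Γ Δ) :
    IsCond T U ⟨p.A ∪ B, p.F ∪ levelPairs T U S Γ Δ B⟩ := by
  refine ⟨hp.1.union hBc, Set.union_subset hp.2.1 hBsub,
    fun r hr r' hr' h => congrArg Prod.snd (hF.eq_of_fst_eq_or_snd_eq hp hAB hr hr' (Or.inl h)),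
    fun r hr r' hr' h => congrArg Prod.fst (hF.eq_of_fst_eq_or_snd_eq hp hAB hr hr' (Or.inr h)),
    ?_, fun r hr => (hF.ht_mem hp hr).1, ?_, ?_, fun r hr => (hF.ht_mem hp hr).2, ?_⟩
  · refine (hp.countable_dom.union ((hS.prod hBc).image fun ib => T.predAt (Γ ib.1) ib.2)).mono ?_
    rintro x ⟨y, hxy | ⟨i, hi, b, hb, hxy⟩⟩
    exacts [Or.inl ⟨y, hxy⟩, Or.inr ⟨(i, b), ⟨hi, hb⟩, (congrArg Prod.fst hxy).symm⟩]
  · intro r hr z hz hzC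
    obtain ⟨i, hi, hri⟩ := hF.exists_lt hr
    have hz_mem := hF.predAt_mem hi hzC
    rw [predAt_ht (T.trans hz hri)] at hz_mem
    exact ⟨_, hz_mem⟩
  · intro r hr c hc hrc
    obtain ⟨i, hi, hri⟩ := hF.exists_lt hr
    have hci := hF.lt_ht_fst i hi c hc
    exact ⟨_, hF.predAt_mem hi hc, ht_predAt hci, lt_predAt hri hrc hci⟩
  · intro r hr r' hr' hlt
    obtain ⟨j, hj, hr'j⟩ := hF.exists_lt hr'
    rw [hF.eq_predAt hp hAB hj hr (T.trans hlt hr'j), hF.eq_predAt hp hAB hj hr' hr'j]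
    exact predAt_lt_predAt (ht_lt_ht hlt) (hF.lt_ht_snd j hj _ (hF.ht_mem hp hr').1)

end ThreadFamily

end Forcing

theorem statement_14_general {α β : Type u} (T : STree α) (U : STree β)
    (hT : NiceTree T) (hU : NiceTree U)
    (p : PPair α β) (hp : IsCond T U p)
    (B : Set Ordinal) (hBc : B.Countable) (hBsub : B ⊆ cofW1)
    (hBmin : ∀ b ∈ B, sSup p.A < b) :
    ∃ q : PPair α β, IsCond T U q ∧ CondLe q p ∧ q.A = p.A ∪ B ∧
      ∀ r ∈ q.F, T.ht r.1 ∈ p.A → r ∈ p.F := by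
  have hAB : ∀ a ∈ p.A, ∀ b ∈ B, a < b := fun a ha b hb =>
    (le_csSup (Ordinal.bddAbove_of_countable hp.1) ha).trans_lt (hBmin b hb)
  obtain ⟨S, Γ, Δ, hF⟩ := hp.exists_threadFamily hT hU (hp.1.union hBc)
    (fun c hc => (Set.union_subset hp.2.1 hBsub hc).1) Set.subset_union_left
  have : Countable (dom' p.F) := hp.countable_dom.to_subtype
  refine ⟨⟨p.A ∪ B, p.F ∪ levelPairs T U S Γ Δ B⟩, hF.isCond hp hBc hBsub hAB S.to_countable,
    ⟨Set.subset_union_left, Set.subset_union_left⟩, rfl, ?_⟩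
  rintro r (hr | ⟨i, hi, b, hb, rfl⟩) hrA
  · exact hr
  · rw [ht_predAt (hF.lt_ht_fst i hi b (Or.inr hb))] at hrA
    exact absurd (hAB b hrA b hb) (lt_irrefl b)

theorem statement_14 (hCH : CH) {α β : Type u} (T : STree α) (U : STree β)
    (hT : NiceTree T) (hU : NiceTree U)
    (p : PPair α β) (hp : IsCond T U p)
    (B : Set Ordinal) (hBc : B.Countable) (hBsub : B ⊆ cofW1)
    (hBmin : ∀ b ∈ B, sSup p.A < b) :
    ∃ q : PPair α β, IsCond T U q ∧ CondLe q p ∧ q.A = p.A ∪ B ∧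
      ∀ r ∈ q.F, T.ht r.1 ∈ p.A → r ∈ p.F :=
  statement_14_general T U hT hU p hp B hBc hBsub hBmin
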